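/- Let β : V → W be a linear map between finite dimensional complex vector spaces, and let S₁, S₂ be subspaces of V such that ker(β) ⊆ S₁ and the restriction of β to S₂ is injective. Then dim(S₁ ∩ S₂) = dim(β(S₁) ∩ β(S₂)). -/
import Mathlib


open Module

/-- Lemma 3 (dimension form): for a linear map `β : V → W` of finite dimensional complex
vector spaces and subspaces `S₁, S₂ ⊆ V` with `ker β ⊆ S₁` and `β` injective on `S₂`,
one has `dim (S₁ ∩ S₂) = dim (β(S₁) ∩ β(S₂))`. -/
theorem stmt_0 {V W : Type*} [AddCommGroup V] [Module ℂ V] [AddCommGroup W] [Module ℂ W]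
    [FiniteDimensional ℂ V] [FiniteDimensional ℂ W]
    (β : V →ₗ[ℂ] W) (S₁ S₂ : Submodule ℂ V)
    (h₁ : LinearMap.ker β ≤ S₁)
    (h₂ : Set.InjOn β (S₂ : Set V)) :
    finrank ℂ ↥(S₁ ⊓ S₂) = finrank ℂ ↥(S₁.map β ⊓ S₂.map β) := by
  have hmap : (S₁ ⊓ S₂).map β = S₁.map β ⊓ S₂.map β := by
    apply le_antisymm (Submodule.map_inf_le β)
    rintro w ⟨⟨x, hx, hxw⟩, ⟨y, hy, hyw⟩⟩
    have hker : x - y ∈ LinearMap.ker β := by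
      simp [LinearMap.mem_ker, hxw, hyw, sub_eq_zero]
    have hy1 : y ∈ S₁ := by
      have := h₁ hker
      have : x - (x - y) ∈ S₁ := S₁.sub_mem hx this
      simpa using this
    exact ⟨y, ⟨hy1, hy⟩, hyw⟩
  rw [← hmap]
  -- β is injective on S₁ ⊓ S₂
  have hinj : Function.Injective (β ∘ₗ (S₁ ⊓ S₂).subtype) := by
    intro a b hab
    have ha : (a : V) ∈ S₂ := a.2.2
    have hb : (b : V) ∈ S₂ := b.2.2
    exact Subtype.ext (h₂ ha hb hab)
  have hrange : LinearMap.range (β ∘ₗ (S₁ ⊓ S₂).subtype) = (S₁ ⊓ S₂).map β := by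
    rw [LinearMap.range_comp, Submodule.range_subtype]
  rw [← hrange, LinearMap.finrank_range_of_inj hinj]
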